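/- For a standard normal random variable z and any w ≥ 0, P(z ≥ w) ≥ √(2/π)·exp(−w²/2) / (w + √(w² + 4)). -/

import Mathlib

/-!
Let `G(x) = 2 e^{-x²/2} / (x + √(x² + 4))`, so that the claimed bound is `G(w) / √(2π)`.
A direct computation gives `-G'(x) = G(x) (x + 1/√(x² + 4))`, and this is at most `e^{-x²/2}`
because `x √(x² + 4) ≤ x² + 2` (AM-GM). Since `G → 0` at `+∞`, integrating `-G' ≤ e^{-x²/2}`
over `(w, ∞)` gives `G(w) ≤ ∫_w^∞ e^{-x²/2} dx`.
-/

open Real MeasureTheory Set Filter Topology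

theorem le_integral_Ioi_of_hasDerivAt_of_neg_deriv_le {f f' φ : ℝ → ℝ} {a l : ℝ}
    (hcont : ContinuousOn f (Ici a)) (hderiv : ∀ x ∈ Ioi a, HasDerivAt f (f' x) x)
    (hφ : IntegrableOn φ (Ioi a)) (hle : ∀ x ∈ Ioi a, -f' x ≤ φ x)
    (hf : Tendsto f atTop (𝓝 l)) :
    f a - l ≤ ∫ x in Ioi a, φ x := by
  have hb : ∀ᶠ b in atTop, f a - f b ≤ ∫ x in a..b, φ x := by
    filter_upwards [eventually_ge_atTop a] with b hab
    have := intervalIntegral.sub_le_integral_of_hasDeriv_right_of_le hab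
      (hcont.neg.mono Icc_subset_Ici_self) (fun x hx => (hderiv x hx.1).neg.hasDerivWithinAt)
      ((integrableOn_Icc_iff_integrableOn_Ioc (f := φ)).mpr (hφ.mono_set Ioc_subset_Ioi_self))
      (fun x hx => hle x hx.1)
    simpa only [Pi.neg_apply, neg_sub_neg] using this
  exact le_of_tendsto_of_tendsto (tendsto_const_nhds.sub hf)
    (intervalIntegral_tendsto_integral_Ioi a hφ tendsto_id) hb

noncomputable def gaussTailMinorant (x : ℝ) : ℝ := 2 * exp (-x ^ 2 / 2) / (x + √(x ^ 2 + 4))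

lemma add_sqrt_sq_add_four_pos (x : ℝ) : 0 < x + √(x ^ 2 + 4) := by
  nlinarith [sq_sqrt (by positivity : (0 : ℝ) ≤ x ^ 2 + 4), sqrt_nonneg (x ^ 2 + 4)]

lemma hasDerivAt_gaussTailMinorant (x : ℝ) :
    HasDerivAt gaussTailMinorant (-(gaussTailMinorant x * (x + (√(x ^ 2 + 4))⁻¹))) x := by
  have hd := add_sqrt_sq_add_four_pos x
  have hexp : HasDerivAt (fun y => 2 * exp (-y ^ 2 / 2)) (2 * (exp (-x ^ 2 / 2) * -x)) x := by
    have : HasDerivAt (fun y : ℝ => -y ^ 2 / 2) (-x) x :=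
      ((hasDerivAt_pow 2 x).neg.div_const 2).congr_deriv (by ring)
    exact this.exp.const_mul 2
  have hden : HasDerivAt (fun y => y + √(y ^ 2 + 4)) (1 + 2 * x / (2 * √(x ^ 2 + 4))) x := by
    have : HasDerivAt (fun y : ℝ => y ^ 2 + 4) (2 * x) x := by
      simpa using (hasDerivAt_pow 2 x).add_const 4
    exact (hasDerivAt_id x).add (this.sqrt (by positivity))
  refine (hexp.div hden hd.ne').congr_deriv ?_
  unfold gaussTailMinorant
  field_simp
  ring

lemma neg_deriv_gaussTailMinorant_le (x : ℝ) :
    gaussTailMinorant x * (x + (√(x ^ 2 + 4))⁻¹) ≤ exp (-x ^ 2 / 2) := by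
  set s := √(x ^ 2 + 4)
  have hs : 0 < s := by positivity
  have hs2 : s ^ 2 = x ^ 2 + 4 := sq_sqrt (by positivity)
  have hd : 0 < x + s := add_sqrt_sq_add_four_pos x
  have hratio : 2 * (x + s⁻¹) ≤ x + s := by
    have : x + s - 2 * (x + s⁻¹) = (x ^ 2 + 2 - x * s) / s := by
      field_simp
      linear_combination hs2
    rw [← sub_nonneg, this]
    exact div_nonneg (by nlinarith [sq_nonneg (x - s)]) hs.le
  unfold gaussTailMinorant
  rw [div_mul_eq_mul_div, div_le_iff₀ hd]
  nlinarith [exp_pos (-x ^ 2 / 2)]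

lemma tendsto_gaussTailMinorant_atTop : Tendsto gaussTailMinorant atTop (𝓝 0) := by
  have hexp : Tendsto (fun x : ℝ => 2 * exp (-x ^ 2 / 2)) atTop (𝓝 0) := by
    simpa using (tendsto_exp_comp_nhds_zero.mpr ((tendsto_neg_atBot_iff.mpr
      (tendsto_pow_atTop two_ne_zero)).atBot_div_const two_pos)).const_mul 2
  have hden : Tendsto (fun x : ℝ => x + √(x ^ 2 + 4)) atTop atTop :=
    tendsto_atTop_mono (fun x => le_add_of_nonneg_right (sqrt_nonneg _)) tendsto_id
  have := hexp.mul hden.inv_tendsto_atTop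
  rw [zero_mul] at this
  exact this.congr fun x => (div_eq_mul_inv _ _).symm

lemma integrable_exp_neg_sq_div_two : Integrable fun x : ℝ => exp (-x ^ 2 / 2) := by
  simpa [neg_div, div_eq_inv_mul] using integrable_exp_neg_mul_sq (b := 1 / 2) (by norm_num)

theorem gaussian_tail_lower_general (w : ℝ) :
    ∫ x in Set.Ici w, Real.exp (-x ^ 2 / 2) / Real.sqrt (2 * π) ≥
      Real.sqrt (2 / π) * Real.exp (-w ^ 2 / 2) / (w + Real.sqrt (w ^ 2 + 4)) := by
  have hmills : gaussTailMinorant w ≤ ∫ x in Ioi w, exp (-x ^ 2 / 2) := by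
    simpa using le_integral_Ioi_of_hasDerivAt_of_neg_deriv_le
      (fun x _ => (hasDerivAt_gaussTailMinorant x).continuousAt.continuousWithinAt)
      (fun x _ => hasDerivAt_gaussTailMinorant x) integrable_exp_neg_sq_div_two.integrableOn
      (fun x _ => by simpa using neg_deriv_gaussTailMinorant_le x) tendsto_gaussTailMinorant_atTop
  have hnorm : √(2 / π) = 2 / √(2 * π) := by
    rw [eq_div_iff (by positivity), ← sqrt_mul (by positivity),
      show 2 / π * (2 * π) = 2 ^ 2 by field_simp, sqrt_sq zero_le_two]
  rw [integral_Ici_eq_integral_Ioi, integral_div, ge_iff_le, hnorm]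
  calc 2 / √(2 * π) * exp (-w ^ 2 / 2) / (w + √(w ^ 2 + 4))
      = gaussTailMinorant w / √(2 * π) := by unfold gaussTailMinorant; ring
    _ ≤ _ := by gcongr

/-- Gaussian tail lower bound: `P(z ≥ w) ≥ √(2/π) exp(-w²/2) / (w + √(w² + 4))` for `w ≥ 0`. -/
theorem gaussian_tail_lower (w : ℝ) (hw : 0 ≤ w) :
    ∫ x in Set.Ici w, Real.exp (-x ^ 2 / 2) / Real.sqrt (2 * π) ≥
      Real.sqrt (2 / π) * Real.exp (-w ^ 2 / 2) / (w + Real.sqrt (w ^ 2 + 4)) :=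
  gaussian_tail_lower_general w
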